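/- arXiv:cs/9902005 — 4 statements merged into one kernel-verified Lean document; each statement's English description precedes it below -/
import Mathlib

section
/- The mutual search algorithm HalfInTurn_n for odd n, in which site i queries sites i+1, i+2, ..., i+(n-1)/2 (mod n), with all queries of site 0 first, then all queries of site 1, and so on, has cost exactly n-1. Specifically, for i < j, if j - i ≤ (n-1)/2 then the cost of edge (i,j) is j-i; otherwise the cost of edge (j,i) is (n-1)/2 + n + i - j; and the maximum of these quantities over all pairs is n-1. -/
/-- An ordered tournament on `n` sites: a tournament (exactly one directed
edge between each pair of distinct vertices) together with a total order
on its edges, given by an (injective-on-edges) time stamp. -/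
structure OrdTournament (n : ℕ) where
  adj : Fin n → Fin n → Bool
  irrefl : ∀ i, adj i i = false
  oneway : ∀ i j : Fin n, i ≠ j → (adj i j = true ↔ adj j i = false)
  time : Fin n → Fin n → ℕ
  time_inj : ∀ i j k l : Fin n, adj i j = true → adj k l = true →
      time i j = time k l → (i, j) = (k, l)

namespace OrdTournament

variable {n : ℕ}

/-- Row `i`: the targets of the out-edges of vertex `i`. -/
def row (T : OrdTournament n) (i : Fin n) : Finset (Fin n) :=
  Finset.univ.filter (fun j => T.adj i j = true)

/-- The length of row `i` (the outdegree of `i`). -/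
def rowLen (T : OrdTournament n) (i : Fin n) : ℕ := (T.row i).card

/-- The maximum row length. -/
def maxRow (T : OrdTournament n) : ℕ := Finset.univ.sup T.rowLen

/-- The number of queries of row `i` strictly before the edge `(a,b)`. -/
def nBefore (T : OrdTournament n) (i a b : Fin n) : ℕ :=
  ((T.row i).filter (fun j => T.time i j < T.time a b)).card

/-- The cost of edge `(a,b)`:
`|E_a^{≺(a,b)}| + 1 + |E_b^{≺(a,b)}|`. -/
def edgeCost (T : OrdTournament n) (a b : Fin n) : ℕ :=
  T.nBefore a a b + 1 + T.nBefore b a b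

/-- The cost of the algorithm: the maximum edge cost. -/
def cost (T : OrdTournament n) : ℕ :=
  (Finset.univ.filter (fun p : Fin n × Fin n => T.adj p.1 p.2 = true)).sup
    (fun p => T.edgeCost p.1 p.2)

end OrdTournament


/-!
Site `i` queries `j` exactly when the offset `(j - i) mod n` lies in `[1, m]`, and it does so
at time `i * n + offset`. So at the time of an edge `(a, b)` of offset `e`, site `a` has made
`e - 1` queries, every site `i < a` all `m` of its queries and every site `i > a` none. The
cost of `(a, b)` is therefore `e`, plus `m` if `b < a`: at most `2m = n - 1`, with equality
for the edge `(m + 1, 0)`.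
-/

open Finset

structure OrdTournament.IsHalfInTurn {n : ℕ} (m : ℕ) (T : OrdTournament n) : Prop where
  n_eq : n = 2 * m + 1
  adj_eq : ∀ i j : Fin n,
    T.adj i j = decide (1 ≤ (j.val + n - i.val) % n ∧ (j.val + n - i.val) % n ≤ m)
  time_eq : ∀ i j : Fin n, T.time i j = i.val * n + (j.val + n - i.val) % n

section Offset

variable {n i j k d : ℕ}

lemma sub_mod_add_mod_cancel (hi : i < n) (hk : k < n) : ((k + n - i) % n + i) % n = k := by
  rw [show k + n - i = k + (n - i) by omega, Nat.mod_add_mod,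
    show k + (n - i) + i = k + n by omega, Nat.add_mod_right, Nat.mod_eq_of_lt hk]

lemma add_mod_sub_mod_cancel (hi : i < n) (hd : d < n) : ((d + i) % n + n - i) % n = d := by
  have : (d + i) % n < n := Nat.mod_lt _ (by omega)
  rw [show (d + i) % n + n - i = (d + i) % n + (n - i) by omega, Nat.mod_add_mod,
    show d + i + (n - i) = d + n by omega, Nat.add_mod_right, Nat.mod_eq_of_lt hd]

lemma add_sub_mod_of_lt (hij : i < j) (hj : j < n) : (j + n - i) % n = j - i := by
  rw [show j + n - i = j - i + n by omega, Nat.add_mod_right, Nat.mod_eq_of_lt (by omega)]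

lemma add_sub_mod_of_gt (hji : j < i) (hi : i < n) : (j + n - i) % n = n + j - i := by
  rw [Nat.mod_eq_of_lt (by omega)]
  omega

end Offset

lemma card_filter_Icc_mul_add_lt {m n i a e : ℕ} (hmn : m < n) (he : 1 ≤ e) (hem : e ≤ m) :
    #{d ∈ Icc 1 m | i * n + d < a * n + e} = if i < a then m else if i = a then e - 1 else 0 := by
  split_ifs with hia hia'
  · have : i * n + n ≤ a * n := by simpa [add_one_mul] using Nat.mul_le_mul_right n hia
    rw [filter_true_of_mem fun d hd => by simp only [mem_Icc] at hd; omega, Nat.card_Icc]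
    omega
  · subst hia'
    rw [← Nat.card_Ico 1 e]
    congr 1
    ext d
    simp only [mem_filter, mem_Icc, mem_Ico]
    omega
  · have : a * n + n ≤ i * n := by
      simpa [add_one_mul] using Nat.mul_le_mul_right n (show a + 1 ≤ i by omega)
    rw [filter_false_of_mem fun d hd => by simp only [mem_Icc] at hd; omega, card_empty]

namespace OrdTournament.IsHalfInTurn

variable {m n : ℕ} {T : OrdTournament n}

lemma m_lt_n (hT : T.IsHalfInTurn m) : m < n := by
  have := hT.n_eq
  omega

lemma adj_iff (hT : T.IsHalfInTurn m) (a b : Fin n) :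
    T.adj a b = true ↔ 1 ≤ (b.val + n - a.val) % n ∧ (b.val + n - a.val) % n ≤ m := by
  rw [hT.adj_eq, decide_eq_true_iff]

lemma nBefore_eq (hT : T.IsHalfInTurn m) (i a b : Fin n) :
    T.nBefore i a b = #{d ∈ Icc 1 m | i.val * n + d < T.time a b} := by
  have hmn := hT.m_lt_n
  unfold nBefore row
  rw [filter_filter]
  refine card_nbij' (fun k => (k.val + n - i.val) % n)
    (fun d => ⟨(d + i.val) % n, Nat.mod_lt _ (by omega)⟩) ?_ ?_ ?_ ?_
  · intro k hk
    simp only [mem_coe, mem_filter, mem_univ, true_and, hT.adj_iff, hT.time_eq i,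
      mem_Icc] at hk ⊢
    exact hk
  · intro d hd
    simp only [mem_coe, mem_filter, mem_Icc] at hd
    simp only [mem_coe, mem_filter, mem_univ, true_and, hT.adj_iff, hT.time_eq i,
      add_mod_sub_mod_cancel i.isLt (show d < n by omega)]
    exact hd
  · intro k _
    exact Fin.ext (sub_mod_add_mod_cancel i.isLt k.isLt)
  · intro d hd
    simp only [mem_coe, mem_filter, mem_Icc] at hd
    exact add_mod_sub_mod_cancel i.isLt (show d < n by omega)

lemma edgeCost_eq (hT : T.IsHalfInTurn m) {a b : Fin n} (hab : T.adj a b = true) :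
    T.edgeCost a b = (b.val + n - a.val) % n + if b.val < a.val then m else 0 := by
  have hne : b.val ≠ a.val := fun h => by
    rw [Fin.val_inj.mp h, T.irrefl] at hab
    exact Bool.false_ne_true hab
  obtain ⟨he, hem⟩ := (hT.adj_iff a b).mp hab
  unfold edgeCost
  rw [hT.nBefore_eq, hT.nBefore_eq, hT.time_eq,
    card_filter_Icc_mul_add_lt hT.m_lt_n he hem, card_filter_Icc_mul_add_lt hT.m_lt_n he hem]
  simp only [lt_irrefl, if_false, if_true, hne]
  omega

lemma edgeCost_of_lt (hT : T.IsHalfInTurn m) {i j : Fin n} (hij : i.val < j.val)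
    (hji : j.val - i.val ≤ m) : T.edgeCost i j = j.val - i.val := by
  have he := add_sub_mod_of_lt hij j.isLt
  rw [hT.edgeCost_eq ((hT.adj_iff i j).mpr (by omega)), he, if_neg (by omega), add_zero]

lemma edgeCost_of_gt (hT : T.IsHalfInTurn m) {i j : Fin n} (hij : i.val < j.val)
    (hji : m < j.val - i.val) : T.edgeCost j i = m + (n + i.val - j.val) := by
  have he := add_sub_mod_of_gt hij j.isLt
  have := hT.n_eq
  rw [hT.edgeCost_eq ((hT.adj_iff j i).mpr (by omega)), he, if_pos hij, add_comm]

lemma edgeCost_le (hT : T.IsHalfInTurn m) {a b : Fin n} (hab : T.adj a b = true) :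
    T.edgeCost a b ≤ 2 * m := by
  have := ((hT.adj_iff a b).mp hab).2
  rw [hT.edgeCost_eq hab]
  split_ifs <;> omega

lemma cost_eq (hT : T.IsHalfInTurn m) : T.cost = 2 * m := by
  refine le_antisymm (Finset.sup_le fun p hp => hT.edgeCost_le (mem_filter.mp hp).2) ?_
  obtain rfl | hm := Nat.eq_zero_or_pos m
  · exact Nat.zero_le _
  have hn := hT.n_eq
  have ha : m + 1 < n := by omega
  have hb : 0 < n := by omega
  have hab : T.adj ⟨m + 1, ha⟩ ⟨0, hb⟩ = true := by
    rw [hT.adj_iff, show (0 + n - (m + 1)) % n = m by rw [Nat.mod_eq_of_lt] <;> omega]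
    omega
  calc 2 * m = T.edgeCost ⟨m + 1, ha⟩ ⟨0, hb⟩ := by
        rw [hT.edgeCost_of_gt (i := ⟨0, hb⟩) (j := ⟨m + 1, ha⟩) m.succ_pos (by simp)]
        show 2 * m = m + (n + 0 - (m + 1))
        omega
    _ ≤ T.cost := by
        unfold cost
        exact le_sup (f := fun p : Fin n × Fin n => T.edgeCost p.1 p.2)
          (b := (⟨m + 1, ha⟩, ⟨0, hb⟩)) (mem_filter.mpr ⟨mem_univ _, hab⟩)

end OrdTournament.IsHalfInTurn

theorem halfInTurn_cost_general {m : ℕ} (n : ℕ) (hn : n = 2 * m + 1)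
    (T : OrdTournament n)
    (hadj : ∀ i j : Fin n,
      T.adj i j = decide (1 ≤ (j.val + n - i.val) % n ∧ (j.val + n - i.val) % n ≤ m))
    (htime : ∀ i j : Fin n, T.time i j = i.val * n + (j.val + n - i.val) % n) :
    (∀ i j : Fin n, i.val < j.val →
        (j.val - i.val ≤ m → T.edgeCost i j = j.val - i.val) ∧
        (m < j.val - i.val → T.edgeCost j i = m + (n + i.val - j.val))) ∧
      T.cost = n - 1 := by
  have hT : T.IsHalfInTurn m := ⟨hn, hadj, htime⟩
  refine ⟨fun i j hij => ⟨hT.edgeCost_of_lt hij, hT.edgeCost_of_gt hij⟩, ?_⟩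
  rw [hT.cost_eq]
  omega

/-- Algorithm `HalfInTurn_n` for odd `n = 2m+1`: site `i` queries sites
`i+1, ..., i+m (mod n)`, all queries of site 0 first, then site 1, etc.
For `i < j`: if `j - i ≤ m` then the cost of edge `(i,j)` is `j - i`,
otherwise the cost of edge `(j,i)` is `m + n + i - j`; and the cost of the
algorithm is exactly `n - 1`. -/
theorem halfInTurn_cost {m : ℕ} (hm : 1 ≤ m) (n : ℕ) (hn : n = 2 * m + 1)
    (T : OrdTournament n)
    (hadj : ∀ i j : Fin n,
      T.adj i j = decide (1 ≤ (j.val + n - i.val) % n ∧ (j.val + n - i.val) % n ≤ m))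
    (htime : ∀ i j : Fin n, T.time i j = i.val * n + (j.val + n - i.val) % n) :
    (∀ i j : Fin n, i.val < j.val →
        (j.val - i.val ≤ m → T.edgeCost i j = j.val - i.val) ∧
        (m < j.val - i.val → T.edgeCost j i = m + (n + i.val - j.val))) ∧
      T.cost = n - 1 :=
  halfInTurn_cost_general n hn T hadj htime
end

section
/- For every n of the form 3k+1, there exists a saturated mutual search algorithm on n sites with cost ceil(2(n-1)/3). -/
/-!
Sites `0, …, 2k` run HalfInTurn_{2k+1} in rounds `0, …, k - 1`, site `i` querying `i + d`
(mod `2k+1`) in round `d - 1`; afterwards every site queries each extra site `e ∈ {2k+1, …, 3k}`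
above it, in round `e - (k + 1) < 2k`. As each site queries at most once per round, before an
edge of round `r` its source has made at most `r` queries and its target at most `r + 1`. So a core
edge of distance `d` costs at most `2d ≤ 2k`, and an edge into an extra site costs at most
`r + 1 ≤ 2k`, since an extra site only queries later extra sites, in later rounds. Conversely, in
any ordered tournament the last query of a row costs at least the row length, and core sites
have `2k` out-edges, so the cost is at least the maximum row length, which is at least `2k`.
-/

namespace OrdTournament

variable {n : ℕ} (T : OrdTournament n)

lemma mem_row {i j : Fin n} : j ∈ T.row i ↔ T.adj i j = true := by
  simp [row]

lemma edgeCost_le_cost {a b : Fin n} (h : T.adj a b = true) : T.edgeCost a b ≤ T.cost :=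
  Finset.le_sup (f := fun p : Fin n × Fin n => T.edgeCost p.1 p.2)
    (Finset.mem_filter.mpr ⟨Finset.mem_univ (a, b), h⟩)

lemma cost_le {c : ℕ} (h : ∀ a b, T.adj a b = true → T.edgeCost a b ≤ c) : T.cost ≤ c :=
  Finset.sup_le fun p hp => h p.1 p.2 (Finset.mem_filter.mp hp).2

lemma rowLen_le_maxRow (i : Fin n) : T.rowLen i ≤ T.maxRow :=
  Finset.le_sup (Finset.mem_univ i)

lemma rowLen_le_cost (i : Fin n) : T.rowLen i ≤ T.cost := by
  rcases (T.row i).eq_empty_or_nonempty with hrow | hrow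
  · simp [rowLen, hrow]
  obtain ⟨b, hb, hlast⟩ := (T.row i).exists_max_image (T.time i) hrow
  have hbefore : (T.row i).erase b ⊆ (T.row i).filter (fun j => T.time i j < T.time i b) := by
    intro j hj
    obtain ⟨hjb, hj⟩ := Finset.mem_erase.mp hj
    refine Finset.mem_filter.mpr ⟨hj, lt_of_le_of_ne (hlast j hj) fun htime => hjb ?_⟩
    simpa using T.time_inj i j i b ((T.mem_row).mp hj) ((T.mem_row).mp hb) htime
  calc T.rowLen i = ((T.row i).erase b).card + 1 := (Finset.card_erase_add_one hb).symm
    _ ≤ T.nBefore i i b + 1 := by gcongr; exact Finset.card_le_card hbefore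
    _ ≤ T.edgeCost i b := by unfold edgeCost; omega
    _ ≤ T.cost := T.edgeCost_le_cost ((T.mem_row).mp hb)

lemma maxRow_le_cost : T.maxRow ≤ T.cost :=
  Finset.sup_le fun i _ => T.rowLen_le_cost i

/-- An ordered tournament played in synchronous rounds: edge `(a, b)` is queried in round
`round a b`, a site makes at most one query per round, and within a round the sites query in
the order of their indices. -/
def ofRounds (adj : Fin n → Fin n → Bool) (irrefl : ∀ i, adj i i = false)
    (oneway : ∀ i j : Fin n, i ≠ j → (adj i j = true ↔ adj j i = false))
    (round : Fin n → Fin n → ℕ)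
    (round_injOn : ∀ a j j', adj a j = true → adj a j' = true → round a j = round a j' → j = j') :
    OrdTournament n where
  adj := adj
  irrefl := irrefl
  oneway := oneway
  time a b := a + n * round a b
  time_inj a b c e hab hce h := by
    have hn : 0 < n := a.pos
    have hac : a = c := by
      apply Fin.ext
      simpa [Nat.add_mul_mod_self_left, Nat.mod_eq_of_lt] using congrArg (· % n) h
    subst hac
    have hround : round a b = round a e := by
      simpa [Nat.add_mul_div_left _ _ hn, Nat.div_eq_of_lt] using congrArg (· / n) h
    rw [round_injOn a b e hab hce hround]

section ofRounds

variable {adj : Fin n → Fin n → Bool} {irrefl : ∀ i, adj i i = false}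
  {oneway : ∀ i j : Fin n, i ≠ j → (adj i j = true ↔ adj j i = false)}
  {round : Fin n → Fin n → ℕ}
  {round_injOn : ∀ a j j', adj a j = true → adj a j' = true → round a j = round a j' → j = j'}

local notation "R" => ofRounds adj irrefl oneway round round_injOn

lemma time_ofRounds_lt_of_round_lt {a b c e : Fin n} (h : round a b < round c e) :
    (R).time a b < (R).time c e := by
  have : n * (round a b + 1) ≤ n * round c e := Nat.mul_le_mul_left n h
  simp only [ofRounds, Nat.mul_succ] at *
  omega

lemma card_filter_row_ofRounds_le {i : Fin n} {p : Fin n → Prop} [DecidablePred p] {m : ℕ}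
    (h : ∀ j, adj i j = true → p j → round i j < m) : ((R).row i |>.filter p).card ≤ m := by
  have hmaps : Set.MapsTo (round i) ((R).row i |>.filter p) (Finset.range m) := fun j hj => by
    rw [Finset.mem_coe, Finset.mem_filter, mem_row] at hj
    exact Finset.mem_range.mpr (h j hj.1 hj.2)
  have hinj : Set.InjOn (round i) ((R).row i |>.filter p) := fun j hj j' hj' =>
    round_injOn i j j' ((R).mem_row.mp (Finset.mem_filter.mp hj).1)
      ((R).mem_row.mp (Finset.mem_filter.mp hj').1)
  simpa using Finset.card_le_card_of_injOn _ hmaps hinj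

lemma nBefore_ofRounds_self_le (a b : Fin n) : (R).nBefore a a b ≤ round a b :=
  card_filter_row_ofRounds_le fun _ _ htime =>
    Nat.lt_of_mul_lt_mul_left (Nat.lt_of_add_lt_add_left (n := a) htime)

lemma nBefore_ofRounds_le (i a b : Fin n) : (R).nBefore i a b ≤ round a b + 1 :=
  card_filter_row_ofRounds_le fun _ _ htime => Nat.lt_succ_of_le <|
    le_of_not_gt fun h => lt_asymm (time_ofRounds_lt_of_round_lt h) htime

lemma nBefore_ofRounds_eq_zero {i a b : Fin n}
    (h : ∀ j, adj i j = true → round a b < round i j) : (R).nBefore i a b = 0 := by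
  refine Finset.card_eq_zero.mpr (Finset.filter_eq_empty_iff.mpr fun j hj => ?_)
  exact lt_asymm (time_ofRounds_lt_of_round_lt (h j ((R).mem_row.mp hj)))

end ofRounds

end OrdTournament

/-- `(j - i) mod m` for `i, j < m`, written without `%` so that `omega` can reason about it. -/
def cyclicDist (m i j : ℕ) : ℕ := if i ≤ j then j - i else j + m - i

namespace HalfInTurn

variable (k : ℕ)

/-- Sites `0, …, 2k` carry HalfInTurn_{2k+1}, in which `i` queries `i + 1, …, i + k` mod `2k+1`;
every site queries each extra site `2k+1, …, 3k` above it. -/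
def IsEdge (i j : Fin (3 * k + 1)) : Prop :=
  ((j : ℕ) < 2 * k + 1 ∧ (i : ℕ) < 2 * k + 1 ∧
      0 < cyclicDist (2 * k + 1) i j ∧ cyclicDist (2 * k + 1) i j ≤ k) ∨
    (2 * k + 1 ≤ (j : ℕ) ∧ i < j)

instance : DecidableRel (IsEdge k) := fun i j => by unfold IsEdge; infer_instance

def round (i j : Fin (3 * k + 1)) : ℕ :=
  if (j : ℕ) < 2 * k + 1 then cyclicDist (2 * k + 1) i j - 1 else j - (k + 1)

variable {k}

lemma not_isEdge_self (i : Fin (3 * k + 1)) : ¬ IsEdge k i i := by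
  unfold IsEdge cyclicDist
  split_ifs <;> omega

lemma isEdge_iff_not_isEdge {i j : Fin (3 * k + 1)} (h : i ≠ j) :
    IsEdge k i j ↔ ¬ IsEdge k j i := by
  rw [Ne, Fin.ext_iff] at h
  unfold IsEdge cyclicDist
  split_ifs <;> omega

lemma round_injOn {a j j' : Fin (3 * k + 1)} (hj : IsEdge k a j) (hj' : IsEdge k a j')
    (h : round k a j = round k a j') : j = j' := by
  rw [Fin.ext_iff]
  unfold IsEdge round cyclicDist at *
  split_ifs at * <;> omega

variable (k)

def extended : OrdTournament (3 * k + 1) :=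
  OrdTournament.ofRounds (fun i j => decide (IsEdge k i j))
    (fun i => decide_eq_false (not_isEdge_self i))
    (fun i j h => by simpa using isEdge_iff_not_isEdge h)
    (round k)
    (fun _ _ _ hj hj' => round_injOn (of_decide_eq_true hj) (of_decide_eq_true hj'))

variable {k} in
lemma extended_adj {i j : Fin (3 * k + 1)} : (extended k).adj i j = true ↔ IsEdge k i j :=
  decide_eq_true_iff

lemma edgeCost_extended_le {a b : Fin (3 * k + 1)} (h : (extended k).adj a b = true) :
    (extended k).edgeCost a b ≤ 2 * k := by
  have hself : (extended k).nBefore a a b ≤ round k a b :=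
    OrdTournament.nBefore_ofRounds_self_le a b
  unfold OrdTournament.edgeCost
  rcases extended_adj.mp h with ⟨hb, -, hpos, hle⟩ | ⟨hb, hab⟩
  · have htarget : (extended k).nBefore b a b ≤ round k a b + 1 :=
      OrdTournament.nBefore_ofRounds_le b a b
    rw [round, if_pos hb] at hself htarget
    omega
  · have htarget : (extended k).nBefore b a b = 0 := by
      refine OrdTournament.nBefore_ofRounds_eq_zero fun j hj => ?_
      have hbj := extended_adj.mp hj
      unfold IsEdge at hbj
      unfold round
      split_ifs <;> omega
    rw [round, if_neg (by omega)] at hself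
    omega

lemma cost_extended_le : (extended k).cost ≤ 2 * k :=
  OrdTournament.cost_le _ fun _ _ => edgeCost_extended_le k

lemma two_mul_le_rowLen_extended_zero : 2 * k ≤ (extended k).rowLen 0 := by
  have hlt : ∀ m ∈ Finset.Icc 1 k ∪ Finset.Icc (2 * k + 1) (3 * k), m < 3 * k + 1 := by
    intro m hm
    simp only [Finset.mem_union, Finset.mem_Icc] at hm
    omega
  have hsub : (Finset.Icc 1 k ∪ Finset.Icc (2 * k + 1) (3 * k)).attachFin hlt ⊆
      (extended k).row 0 := by
    intro j hj
    simp only [Finset.mem_attachFin, Finset.mem_union, Finset.mem_Icc] at hj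
    rw [OrdTournament.mem_row, extended_adj]
    simp only [IsEdge, cyclicDist, Fin.lt_def, Fin.val_zero, zero_le, if_true, tsub_zero]
    omega
  have hdisj : Disjoint (Finset.Icc 1 k) (Finset.Icc (2 * k + 1) (3 * k)) :=
    Finset.disjoint_left.mpr fun m hm hm' => by
      simp only [Finset.mem_Icc] at hm hm'
      omega
  calc 2 * k = ((Finset.Icc 1 k ∪ Finset.Icc (2 * k + 1) (3 * k)).attachFin hlt).card := by
        rw [Finset.card_attachFin, Finset.card_union_of_disjoint hdisj, Nat.card_Icc,
          Nat.card_Icc]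
        omega
    _ ≤ (extended k).rowLen 0 := Finset.card_le_card hsub

end HalfInTurn

/-- For every `n` of the form `3k+1` there is a saturated mutual search
algorithm on `n` sites (its cost equals its maximum row length) with cost
`⌈2(n-1)/3⌉` (written `(2*(n-1)+2)/3` with natural division). -/
theorem saturatedHalfInTurn_exists (k : ℕ) :
    ∃ T : OrdTournament (3 * k + 1),
      T.cost = T.maxRow ∧
      T.cost = (2 * (3 * k + 1 - 1) + 2) / 3 := by
  set T := HalfInTurn.extended k
  have hcost : T.cost = 2 * k := le_antisymm (HalfInTurn.cost_extended_le k)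
    ((HalfInTurn.two_mul_le_rowLen_extended_zero k).trans (T.rowLen_le_cost 0))
  have hmaxRow : T.maxRow = 2 * k := le_antisymm (T.maxRow_le_cost.trans hcost.le)
    ((HalfInTurn.two_mul_le_rowLen_extended_zero k).trans (T.rowLen_le_maxRow 0))
  exact ⟨T, hcost.trans hmaxRow.symm, by omega⟩
end

section
/- If a mutual search algorithm T' results from a partial mutual search algorithm T by retiring an edge e of minimum retiring cost among all non-retired edges, then the cost of T equals the cost of T'. In other words, greedily retiring the cheapest edge at each step yields an optimal total refinement. -/
/-!
Exchange argument. Take an optimal total refinement `M = A ++ e :: B ++ R` of `(adj, R)` and move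
`e` to the end of the non-retired part, giving `A ++ B ++ e :: R`, a refinement of `(adj, e :: R)`.
No other edge gets more predecessors, and the new cost of `e` is its retiring cost, which by
minimality is at most the retiring cost of the last non-retired edge `g` of `M`; that is exactly
the cost of `g` in `M`.
-/

/-- `adj` is a tournament on `Fin n`: no self-loops and exactly one direction
between each pair of distinct vertices. -/
def IsTourn {n : ℕ} (adj : Fin n → Fin n → Bool) : Prop :=
  (∀ i, adj i i = false) ∧ ∀ i j : Fin n, i ≠ j → (adj i j = true ↔ adj j i = false)

/-- `M` is a total refinement of the partial MS algorithm `(adj, R)`: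
`M` enumerates all edges of the tournament without repetition (earlier in the
list meaning earlier in the total order `≺`), and the retired list `R` forms
the final segment of `M`. -/
def IsRefinement {n : ℕ} (adj : Fin n → Fin n → Bool)
    (R M : List (Fin n × Fin n)) : Prop :=
  M.Nodup ∧ (∀ e : Fin n × Fin n, e ∈ M ↔ adj e.1 e.2 = true) ∧ ∃ P, M = P ++ R

/-- The cost of edge `e = (i,j)` in the totally ordered tournament `M`:
`|E_i^{≺e}| + 1 + |E_j^{≺e}|`, i.e. one more than the number of edges
preceding `e` in `M` that leave `i` or `j`. -/
def listEdgeCost {n : ℕ} (M : List (Fin n × Fin n)) (e : Fin n × Fin n) : ℕ :=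
  ((M.take (M.idxOf e)).filter (fun f => f.1 = e.1 ∨ f.1 = e.2)).length + 1

/-- The cost of the totally ordered tournament `M`: the maximum edge cost. -/
def listCost {n : ℕ} (M : List (Fin n × Fin n)) : ℕ :=
  (M.map (listEdgeCost M)).foldr max 0

/-- The retiring cost of an edge `e = (i,j) ∈ E_i - R`:
`|E_i - R| + |E_j - R|`. -/
def retCost {n : ℕ} (adj : Fin n → Fin n → Bool) (R : List (Fin n × Fin n))
    (e : Fin n × Fin n) : ℕ :=
  (Finset.univ.filter (fun f : Fin n × Fin n =>
      adj f.1 f.2 = true ∧ (f.1 = e.1 ∨ f.1 = e.2) ∧ f ∉ R)).card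

/-- The cost of the partial MS algorithm `(adj, R)`: the minimum cost among
all of its total refinements. -/
noncomputable def pCost {n : ℕ} (adj : Fin n → Fin n → Bool)
    (R : List (Fin n × Fin n)) : ℕ :=
  sInf {c : ℕ | ∃ M, IsRefinement adj R M ∧ listCost M = c}

lemma List.take_idxOf_append_cons {α : Type*} [BEq α] [LawfulBEq α] {X Y : List α} {a : α}
    (h : a ∉ X) : (X ++ a :: Y).take ((X ++ a :: Y).idxOf a) = X := by
  rw [List.idxOf_append_of_notMem h, List.idxOf_cons_self, add_zero, List.take_left' rfl]

lemma List.Nodup.notMem_of_append_cons {α : Type*} {X Y : List α} {a : α}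
    (h : (X ++ a :: Y).Nodup) : a ∉ X :=
  fun ha => (List.nodup_middle.1 h).notMem (List.mem_append_left Y ha)

lemma List.perm_append_append_cons {α : Type*} (A B : List α) (e : α) (R : List α) :
    (A ++ B ++ e :: R).Perm (A ++ e :: B ++ R) := by
  simpa using (List.perm_middle (a := e) (l₁ := B) (l₂ := R)).append_left A

section Costs

variable {n : ℕ}

lemma listEdgeCost_append_cons {X Y : List (Fin n × Fin n)} {f : Fin n × Fin n} (h : f ∉ X) :
    listEdgeCost (X ++ f :: Y) f = (X.filter (fun g => g.1 = f.1 ∨ g.1 = f.2)).length + 1 := by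
  rw [listEdgeCost, List.take_idxOf_append_cons h]

lemma listEdgeCost_le_of_subperm {X X' Y Y' : List (Fin n × Fin n)} {f : Fin n × Fin n}
    (hX : f ∉ X) (h : X'.Subperm X) :
    listEdgeCost (X' ++ f :: Y') f ≤ listEdgeCost (X ++ f :: Y) f := by
  rw [listEdgeCost_append_cons hX, listEdgeCost_append_cons (fun hf => hX (h.subset hf))]
  exact Nat.add_le_add_right (h.filter _).length_le 1

lemma listCost_le_iff {M : List (Fin n × Fin n)} {c : ℕ} :
    listCost M ≤ c ↔ ∀ f ∈ M, listEdgeCost M f ≤ c := by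
  refine ⟨fun h f hf => le_trans ?_ h, fun h => List.max_le_of_forall_le _ c ?_⟩
  · exact List.le_max_of_le (List.mem_map_of_mem hf) le_rfl
  · rintro _ hx
    obtain ⟨f, hf, rfl⟩ := List.mem_map.1 hx
    exact h f hf

lemma listEdgeCost_le_listCost {M : List (Fin n × Fin n)} {f : Fin n × Fin n} (h : f ∈ M) :
    listEdgeCost M f ≤ listCost M :=
  listCost_le_iff.1 le_rfl f h

/-- The edges preceding `f` after the move form a subpermutation of those preceding it before. -/
lemma listEdgeCost_move_le {A B R : List (Fin n × Fin n)} {e f : Fin n × Fin n}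
    (hnd : (A ++ e :: B ++ R).Nodup) (hf : f ∈ A ++ B ++ R) :
    listEdgeCost (A ++ B ++ e :: R) f ≤ listEdgeCost (A ++ e :: B ++ R) f := by
  simp only [List.mem_append] at hf
  rcases hf with (hfA | hfB) | hfR
  · obtain ⟨A₁, A₂, rfl⟩ := List.append_of_mem hfA
    have hnd' : (A₁ ++ f :: (A₂ ++ e :: B ++ R)).Nodup := by simpa using hnd
    simpa using listEdgeCost_le_of_subperm (Y' := A₂ ++ B ++ e :: R) hnd'.notMem_of_append_cons
      (List.Subperm.refl A₁)
  · obtain ⟨B₁, B₂, rfl⟩ := List.append_of_mem hfB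
    have hnd' : (A ++ e :: B₁ ++ f :: (B₂ ++ R)).Nodup := by simpa using hnd
    simpa using listEdgeCost_le_of_subperm (Y' := B₂ ++ e :: R) hnd'.notMem_of_append_cons
      (((List.sublist_cons_self e B₁).append_left A).subperm)
  · obtain ⟨R₁, R₂, rfl⟩ := List.append_of_mem hfR
    have hnd' : (A ++ e :: B ++ R₁ ++ f :: R₂).Nodup := by simpa using hnd
    simpa using listEdgeCost_le_of_subperm (Y' := R₂) hnd'.notMem_of_append_cons
      (List.perm_append_append_cons A B e R₁).subperm

end Costs

namespace IsRefinement

variable {n : ℕ} {adj : Fin n → Fin n → Bool} {R P M : List (Fin n × Fin n)}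

lemma of_cons {e : Fin n × Fin n} (h : IsRefinement adj (e :: R) M) : IsRefinement adj R M := by
  obtain ⟨hnd, hmem, P, rfl⟩ := h
  exact ⟨hnd, hmem, P ++ [e], by simp⟩

lemma mem_iff (h : IsRefinement adj R (P ++ R)) (f : Fin n × Fin n) :
    f ∈ P ↔ adj f.1 f.2 = true ∧ f ∉ R := by
  rw [← h.2.1 f, List.mem_append]
  exact ⟨fun hf => ⟨Or.inl hf, List.disjoint_of_nodup_append h.1 hf⟩,
    fun ⟨hf, hfR⟩ => hf.resolve_right hfR⟩

lemma retCost_eq (h : IsRefinement adj R (P ++ R)) (x : Fin n × Fin n) :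
    retCost adj R x = (P.filter (fun f => f.1 = x.1 ∨ f.1 = x.2)).length := by
  classical
  rw [retCost, ← List.toFinset_card_of_nodup ((List.nodup_append.1 h.1).1.filter _)]
  congr 1
  ext f
  simp only [Finset.mem_filter, Finset.mem_univ, true_and, List.mem_toFinset, List.mem_filter,
    h.mem_iff f, decide_eq_true_eq]
  tauto

/-- `f` is preceded by every other non-retired edge. -/
lemma listEdgeCost_last {X : List (Fin n × Fin n)} {f : Fin n × Fin n}
    (h : IsRefinement adj R (X ++ f :: R)) : listEdgeCost (X ++ f :: R) f = retCost adj R f := by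
  rw [List.append_cons] at h
  rw [listEdgeCost_append_cons (List.nodup_append.1 h.1).1.notMem_of_append_cons, h.retCost_eq f,
    List.filter_append]
  simp

lemma exists_retire_listCost_le {e : Fin n × Fin n} (hM : IsRefinement adj R M)
    (he : adj e.1 e.2 = true) (heR : e ∉ R)
    (hmin : ∀ f : Fin n × Fin n, adj f.1 f.2 = true → f ∉ R →
      retCost adj R e ≤ retCost adj R f) :
    ∃ M', IsRefinement adj (e :: R) M' ∧ listCost M' ≤ listCost M := by
  obtain ⟨hnd, hmem, P, rfl⟩ := id hM
  obtain ⟨A, B, rfl⟩ := List.append_of_mem ((hM.mem_iff e).2 ⟨he, heR⟩)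
  have hperm := List.perm_append_append_cons A B e R
  have hM' : IsRefinement adj (e :: R) (A ++ B ++ e :: R) :=
    ⟨hperm.nodup_iff.2 hnd, fun f => hperm.mem_iff.trans (hmem f), A ++ B, rfl⟩
  refine ⟨_, hM', listCost_le_iff.2 fun f hf => ?_⟩
  by_cases hfe : f = e
  · subst hfe
    obtain ⟨X, g, hXg⟩ := (List.eq_nil_or_concat' (A ++ f :: B)).resolve_left (by simp)
    have hg := (hM.mem_iff g).1 (by simp [hXg])
    have hMg : A ++ f :: B ++ R = X ++ g :: R := by rw [hXg]; simp
    rw [hMg] at hM ⊢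
    calc listEdgeCost (A ++ B ++ f :: R) f = retCost adj R f := hM'.of_cons.listEdgeCost_last
      _ ≤ retCost adj R g := hmin g hg.1 hg.2
      _ = listEdgeCost (X ++ g :: R) g := hM.listEdgeCost_last.symm
      _ ≤ listCost (X ++ g :: R) := listEdgeCost_le_listCost (by simp)
  · exact (listEdgeCost_move_le hnd (by simpa [hfe] using hf)).trans
      (listEdgeCost_le_listCost (hperm.subset hf))

end IsRefinement

theorem greedy_retiring_optimal_general {n : ℕ} (adj : Fin n → Fin n → Bool)
    (R : List (Fin n × Fin n))
    (e : Fin n × Fin n) (he : adj e.1 e.2 = true) (heR : e ∉ R)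
    (hmin : ∀ f : Fin n × Fin n, adj f.1 f.2 = true → f ∉ R →
      retCost adj R e ≤ retCost adj R f) :
    pCost adj R = pCost adj (e :: R) := by
  refine csInf_eq_csInf_of_forall_exists_le ?_ ?_
  · rintro _ ⟨M, hM, rfl⟩
    obtain ⟨M', hM', hle⟩ := hM.exists_retire_listCost_le he heR hmin
    exact ⟨_, ⟨M', hM', rfl⟩, hle⟩
  · rintro _ ⟨M, hM, rfl⟩
    exact ⟨_, ⟨M, hM.of_cons, rfl⟩, le_rfl⟩

/-- Greedy retirement is optimal: if `e` is a non-retired edge of minimum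
retiring cost in the partial MS algorithm `(adj, R)`, then retiring `e`
preserves the cost: `pCost adj R = pCost adj (e :: R)`. -/
theorem greedy_retiring_optimal {n : ℕ} (adj : Fin n → Fin n → Bool)
    (hT : IsTourn adj) (R : List (Fin n × Fin n)) (hR : R.Nodup)
    (hRE : ∀ f ∈ R, adj f.1 f.2 = true)
    (e : Fin n × Fin n) (he : adj e.1 e.2 = true) (heR : e ∉ R)
    (hmin : ∀ f : Fin n × Fin n, adj f.1 f.2 = true → f ∉ R →
      retCost adj R e ≤ retCost adj R f) :
    pCost adj R = pCost adj (e :: R) :=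
  greedy_retiring_optimal_general adj R e he heR hmin
end

section
/- Every mutual search algorithm for two agents on n ≥ 2 sites has cost at least ceil(n/2). -/
namespace OrdTournament

variable {n : ℕ} (T : OrdTournament n)

lemma ne_of_adj {a b : Fin n} (h : T.adj a b = true) : a ≠ b := by
  rintro rfl
  simp [T.irrefl] at h

lemma adj_or_adj {a b : Fin n} (h : a ≠ b) : T.adj a b = true ∨ T.adj b a = true := by
  cases hab : T.adj a b
  · exact .inr ((T.oneway b a h.symm).mpr hab)
  · exact .inl rfl

lemma ite_adj_add_ite_adj (a b : Fin n) :
    ((if T.adj a b = true then 1 else 0) + if T.adj b a = true then 1 else 0) =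
      if a ≠ b then 1 else 0 := by
  by_cases hab : a = b
  · simp [hab, T.irrefl]
  · rcases T.adj_or_adj hab with h | h
    · simp [hab, h, (T.oneway a b hab).mp h]
    · simp [hab, h, (T.oneway b a (Ne.symm hab)).mp h]

lemma two_mul_sum_rowLen : 2 * ∑ i, T.rowLen i = n * (n - 1) := by
  have hrow : ∀ i, T.rowLen i = ∑ j, if T.adj i j = true then 1 else 0 := fun i =>
    Finset.card_filter _ _
  have hoff : ∀ i : Fin n, ∑ j, (if i ≠ j then 1 else 0) = n - 1 := fun i => by
    rw [Finset.sum_boole, Finset.filter_ne, Finset.card_erase_of_mem (Finset.mem_univ i)]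
    simp
  calc 2 * ∑ i, T.rowLen i
      = ∑ i, ∑ j, ((if T.adj i j = true then 1 else 0) + if T.adj j i = true then 1 else 0) := by
        simp only [Finset.sum_add_distrib, hrow]
        rw [Finset.sum_comm (f := fun i j => if T.adj j i = true then 1 else 0)]
        ring
    _ = n * (n - 1) := by
        simp only [T.ite_adj_add_ite_adj, hoff, Finset.sum_const, Finset.card_univ,
          Fintype.card_fin, smul_eq_mul]

lemma two_mul_rowLen_eq_of_forall_lt (h : ∀ i, 2 * T.rowLen i < n) (i : Fin n) :
    2 * T.rowLen i = n - 1 := by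
  have hle : ∀ i ∈ Finset.univ, 2 * T.rowLen i ≤ n - 1 := fun i _ => by
    have := h i
    omega
  refine (Finset.sum_eq_sum_iff_of_le hle).mp ?_ i (Finset.mem_univ i)
  rw [← Finset.mul_sum, two_mul_sum_rowLen, Finset.sum_const, Finset.card_univ,
    Fintype.card_fin, smul_eq_mul]

lemma time_ne_time {i j a b : Fin n} (hij : T.adj i j = true) (hab : T.adj a b = true)
    (hne : (i, j) ≠ (a, b)) : T.time i j ≠ T.time a b :=
  mt (T.time_inj i j a b hij hab) hne

lemma rowLen_le_nBefore_add_one {i a b : Fin n} (hab : T.adj a b = true)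
    (hlast : ∀ j ∈ T.row i, T.time i j ≤ T.time a b) :
    T.rowLen i ≤ T.nBefore i a b + 1 := by
  have hsub : T.row i ⊆ insert b ((T.row i).filter fun j => T.time i j < T.time a b) := by
    intro j hj
    by_cases hjb : j = b
    · exact hjb ▸ Finset.mem_insert_self _ _
    refine Finset.mem_insert_of_mem (Finset.mem_filter.mpr ⟨hj, ?_⟩)
    refine (hlast j hj).lt_of_ne (T.time_ne_time (Finset.mem_filter.mp hj).2 hab ?_)
    simp [hjb]
  exact (Finset.card_le_card hsub).trans (Finset.card_insert_le _ _)

lemma rowLen_le_nBefore {i a b : Fin n} (hab : T.adj a b = true) (hia : i ≠ a)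
    (hlast : ∀ j ∈ T.row i, T.time i j ≤ T.time a b) :
    T.rowLen i ≤ T.nBefore i a b := by
  refine Finset.card_le_card fun j hj => Finset.mem_filter.mpr ⟨hj, ?_⟩
  refine (hlast j hj).lt_of_ne (T.time_ne_time (Finset.mem_filter.mp hj).2 hab ?_)
  simp [hia]

lemma exists_last_edge (hn : 2 ≤ n) :
    ∃ a b, T.adj a b = true ∧ ∀ c d, T.adj c d = true → T.time c d ≤ T.time a b := by
  let edges := Finset.univ.filter fun p : Fin n × Fin n => T.adj p.1 p.2 = true
  have hne : edges.Nonempty := by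
    have h01 : (⟨0, by omega⟩ : Fin n) ≠ ⟨1, by omega⟩ := by simp
    rcases T.adj_or_adj h01 with h | h
    · exact ⟨(_, _), Finset.mem_filter.mpr ⟨Finset.mem_univ _, h⟩⟩
    · exact ⟨(_, _), Finset.mem_filter.mpr ⟨Finset.mem_univ _, h⟩⟩
  obtain ⟨⟨a, b⟩, hab, hlast⟩ := edges.exists_max_image (fun p => T.time p.1 p.2) hne
  exact ⟨a, b, (Finset.mem_filter.mp hab).2, fun c d hcd =>
    hlast (c, d) (Finset.mem_filter.mpr ⟨Finset.mem_univ _, hcd⟩)⟩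

lemma rowLen_add_rowLen_le_cost {a b : Fin n} (hab : T.adj a b = true)
    (hlast : ∀ c d, T.adj c d = true → T.time c d ≤ T.time a b) :
    T.rowLen a + T.rowLen b ≤ T.cost := by
  have hrow : ∀ i, ∀ j ∈ T.row i, T.time i j ≤ T.time a b := fun i j hj =>
    hlast i j (Finset.mem_filter.mp hj).2
  have ha := T.rowLen_le_nBefore_add_one hab (hrow a)
  have hb := T.rowLen_le_nBefore hab (T.ne_of_adj hab).symm (hrow b)
  calc T.rowLen a + T.rowLen b ≤ T.edgeCost a b := by simp only [edgeCost]; omega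
    _ ≤ T.cost := T.edgeCost_le_cost hab

end OrdTournament

/-- Every mutual search algorithm for two agents on `n ≥ 2` sites has cost
at least `⌈n/2⌉` (written `(n+1)/2` with natural division). -/
theorem ms_lower_bound_half {n : ℕ} (hn : 2 ≤ n) (T : OrdTournament n) :
    (n + 1) / 2 ≤ T.cost := by
  by_cases hshort : ∀ i, 2 * T.rowLen i < n
  · have hregular := T.two_mul_rowLen_eq_of_forall_lt hshort
    obtain ⟨a, b, hab, hlast⟩ := T.exists_last_edge hn
    have hcost := T.rowLen_add_rowLen_le_cost hab hlast
    have ha := hregular a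
    have hb := hregular b
    omega
  · obtain ⟨i, hlong⟩ := not_forall.mp hshort
    have := T.rowLen_le_cost i
    omega
end
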